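/- Lower bound for χ_l(K_n, c): Let q be a prime power and let c be a positive integer with c < q − 1 and c dividing q − 1, and let n be an integer with n ≥ (q² − 1)/c + 2. Then χ_l(K_n, c) ≥ q + 1; that is, there exists a list assignment L : Fin n → Finset ℕ with |L(v)| = q for every vertex v and |L(u) ∩ L(v)| ≤ c for all distinct u ≠ v, such that no injective function f : Fin n → ℕ satisfies f(v) ∈ L(v) for every v. -/

import Mathlib

/-!
Let `F = 𝔽_q` and let `H ≤ Fˣ` be the subgroup of order `c`. The colours are the `H`-orbits on
`F²`: the fixed point `0` and `(q² - 1)/c` free orbits. A representative `r` of each free orbit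
gives the list of orbits met by the affine line `⟨r, v⟩ = 1`; it has `q` colours, and two such
lists share at most `c` of them, one for each `h ∈ H`, because distinct lines meet at most once.
Two further lists consist of the orbit `{0}` together with the orbits on `c` lines through the
origin, with disjoint sets of slopes. These `(q² - 1)/c + 2` lists use only `(q² - 1)/c + 1`
colours, so they admit no injective choice of colours; the remaining vertices receive pairwise
disjoint lists of unused colours.
-/

open Finset MulAction Function

theorem exists_pairwise_disjoint_card_eq {α : Type*} [Fintype α] {m c : ℕ}
    (h : m * c ≤ Fintype.card α) :
    ∃ T : Fin m → Finset α, (∀ k, (T k).card = c) ∧ Pairwise (Disjoint on T) := by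
  obtain ⟨e⟩ : Nonempty (Fin m × Fin c ↪ α) :=
    Embedding.nonempty_of_card_le (by simpa using h)
  refine ⟨fun k => univ.map ⟨fun j => e (k, j), fun j j' h => by simpa using e.injective h⟩,
    fun k => by simp, fun k k' hkk' => disjoint_left.2 ?_⟩
  simp only [mem_map, mem_univ, true_and, not_exists]
  rintro _ ⟨j, rfl⟩ j' h
  exact hkk' (Prod.ext_iff.1 (e.injective h)).1.symm

theorem not_injective_of_castLE_lt {K m n : ℕ} (hK : K < m) (hmn : m ≤ n) {f : Fin n → ℕ}
    (hf : ∀ k : Fin m, f (Fin.castLE hmn k) < K) : ¬ Injective f := fun hinj => by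
  obtain ⟨k, l, hkl, hfkl⟩ := Fintype.exists_ne_map_eq_of_card_lt
    (fun k : Fin m => (⟨_, hf k⟩ : Fin K)) (by simpa using hK)
  exact hkl (Fin.castLE_injective hmn (hinj (Fin.mk.inj_iff.1 hfkl)))

theorem exists_uncolorable_listAssignment_of_natCard_lt {ι α : Type*} [Finite ι] [Finite α]
    [DecidableEq α] {n q c : ℕ} (L : ι → Finset α) (hL : ∀ i, (L i).card = q)
    (hLL : ∀ i j, i ≠ j → (L i ∩ L j).card ≤ c) (hα : Nat.card α < Nat.card ι)
    (hι : Nat.card ι ≤ n) :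
    ∃ L' : Fin n → Finset ℕ, (∀ v, (L' v).card = q) ∧
      (∀ u v, u ≠ v → (L' u ∩ L' v).card ≤ c) ∧
      ¬ ∃ f : Fin n → ℕ, Injective f ∧ ∀ v, f v ∈ L' v := by
  set m := Nat.card ι
  set K := Nat.card α
  let e : α ↪ ℕ := (Finite.equivFin α).toEmbedding.trans Fin.valEmbedding
  have he (a : α) : e a < K := (Finite.equivFin α a).isLt
  let idx : Fin m ≃ ι := (Finite.equivFin ι).symm
  let L' : Fin n → Finset ℕ := fun v =>
    if h : (v : ℕ) < m then (L (idx ⟨v, h⟩)).map e else Ico (K + q * v) (K + q * v + q)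
  have old (v : Fin n) (h : (v : ℕ) < m) : L' v = (L (idx ⟨v, h⟩)).map e := dif_pos h
  have fresh (v : Fin n) (h : ¬ (v : ℕ) < m) : L' v = Ico (K + q * v) (K + q * v + q) :=
    dif_neg h
  have inter_fresh (u v : Fin n) (huv : u ≠ v) (hv : ¬ (v : ℕ) < m) : L' u ∩ L' v = ∅ := by
    refine disjoint_iff_inter_eq_empty.1 (disjoint_right.2 fun x hxv hxu => ?_)
    rw [fresh v hv, mem_Ico] at hxv
    by_cases hu : (u : ℕ) < m
    · rw [old u hu, mem_map] at hxu
      obtain ⟨a, -, rfl⟩ := hxu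
      have := he a
      omega
    · rw [fresh u hu, mem_Ico] at hxu
      rcases Nat.lt_or_gt_of_ne (Fin.val_ne_of_ne huv) with h | h <;> nlinarith
  refine ⟨L', fun v => ?_, fun u v huv => ?_, ?_⟩
  · by_cases hv : (v : ℕ) < m
    · rw [old v hv, card_map, hL]
    · rw [fresh v hv, Nat.card_Ico]
      omega
  · by_cases hv : (v : ℕ) < m
    · by_cases hu : (u : ℕ) < m
      · rw [old u hu, old v hv, ← map_inter, card_map]
        exact hLL _ _ fun h => huv (Fin.ext (by simpa using idx.injective h))
      · rw [inter_comm, inter_fresh v u huv.symm hu, card_empty]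
        exact c.zero_le
    · rw [inter_fresh u v huv hv, card_empty]
      exact c.zero_le
  · rintro ⟨f, hf, hfL⟩
    refine not_injective_of_castLE_lt hα hι (fun k => ?_) hf
    have hk := hfL (Fin.castLE hι k)
    rw [old _ k.isLt, mem_map] at hk
    obtain ⟨a, -, ha⟩ := hk
    exact ha ▸ he a

theorem orbitRel_mk_eq_mk_iff {G α : Type*} [Group G] [MulAction G α] {x y : α} :
    (Quotient.mk'' x : orbitRel.Quotient G α) = Quotient.mk'' y ↔ ∃ g : G, g • y = x := by
  rw [Quotient.eq'', orbitRel_apply, mem_orbit_iff]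

theorem orbitRel_mk_eq_mk_zero_iff {G M : Type*} [Group G] [AddMonoid M] [DistribMulAction G M]
    {v : M} : (Quotient.mk'' v : orbitRel.Quotient G M) = Quotient.mk'' 0 ↔ v = 0 := by
  simp [orbitRel_mk_eq_mk_iff, eq_comm]

theorem card_image_orbitRel_mk_mul_card {G α : Type*} [Group G] [Fintype G] [MulAction G α]
    [DecidableEq α] [DecidableEq (orbitRel.Quotient G α)] {s : Finset α}
    (hs : ∀ g : G, ∀ x ∈ s, g • x ∈ s) (hfree : ∀ x ∈ s, ∀ g : G, g • x = x → g = 1) :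
    (s.image (Quotient.mk'' : α → orbitRel.Quotient G α)).card * Fintype.card G = s.card := by
  rw [card_eq_sum_card_fiberwise (f := (Quotient.mk'' : α → orbitRel.Quotient G α))
    fun x hx => mem_image_of_mem _ hx, ← smul_eq_mul, ← sum_const]
  refine sum_congr rfl fun o ho => ?_
  obtain ⟨x, hx, rfl⟩ := mem_image.1 ho
  have hfiber : {y ∈ s | (Quotient.mk'' y : orbitRel.Quotient G α) = Quotient.mk'' x} =
      univ.image fun g : G => g • x := by
    ext y
    simp only [mem_filter, mem_image, mem_univ, true_and, Quotient.eq'', orbitRel_apply,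
      mem_orbit_iff]
    exact ⟨And.right, fun ⟨g, hg⟩ => ⟨hg ▸ hs g x hx, g, hg⟩⟩
  rw [hfiber, card_image_of_injective, card_univ]
  intro g g' (h : g • x = g' • x)
  have := hfree x hx (g'⁻¹ * g) (by rw [mul_smul, h, inv_smul_smul])
  rwa [inv_mul_eq_one, eq_comm] at this

theorem eq_one_of_smul_eq_self {F : Type*} [Field F] {H : Subgroup Fˣ} {h : H} {v : F × F}
    (hv : v ≠ 0) (hhv : h • v = v) : h = 1 := by
  simp only [Subgroup.smul_def, Units.smul_def, Prod.ext_iff, Prod.smul_fst, Prod.smul_snd,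
    smul_eq_mul] at hhv
  rw [← OneMemClass.coe_eq_one, ← Units.val_eq_one]
  rcases ne_or_eq v.1 0 with h1 | h1
  · exact mul_right_cancel₀ h1 (hhv.1.trans (one_mul _).symm)
  · have h2 : v.2 ≠ 0 := fun h2 => hv (Prod.ext h1 h2)
    exact mul_right_cancel₀ h2 (hhv.2.trans (one_mul _).symm)

section Plane

variable {F : Type*} [Field F] [Fintype F] [DecidableEq F]

def affineLine (r : F × F) : Finset (F × F) := {v | r.1 * v.1 + r.2 * v.2 = 1}

def slopeCone (S : Finset F) : Finset (F × F) :=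
  ((univ.erase 0) ×ˢ S).image fun p => (p.1, p.1 * p.2)

theorem mem_affineLine {r v : F × F} : v ∈ affineLine r ↔ r.1 * v.1 + r.2 * v.2 = 1 := by
  simp [affineLine]

theorem mem_slopeCone {S : Finset F} {v : F × F} :
    v ∈ slopeCone S ↔ ∃ x ≠ 0, ∃ y ∈ S, (x, x * y) = v := by
  simp [slopeCone, and_assoc]

theorem zero_notMem_affineLine (r : F × F) : (0 : F × F) ∉ affineLine r := by
  simp [mem_affineLine]

theorem zero_notMem_slopeCone (S : Finset F) : (0 : F × F) ∉ slopeCone S := by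
  simp only [mem_slopeCone, Prod.ext_iff, not_exists]
  tauto

theorem card_affineLine_of_snd_ne_zero {r : F × F} (hr : r.2 ≠ 0) :
    (affineLine r).card = Fintype.card F := by
  rw [← card_univ]
  refine card_nbij' Prod.fst (fun x => (x, (1 - r.1 * x) / r.2)) (by simp) ?_ ?_
    fun _ _ => rfl
  · intro x _
    simp only [mem_coe, mem_affineLine]
    field_simp
    ring
  · intro v hv
    simp only [mem_coe, mem_affineLine] at hv
    ext
    · rfl
    · field_simp
      linear_combination -hv

theorem card_affineLine {r : F × F} (hr : r ≠ 0) : (affineLine r).card = Fintype.card F := by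
  rcases ne_or_eq r.2 0 with h2 | h2
  · exact card_affineLine_of_snd_ne_zero h2
  · have h1 : r.swap.2 ≠ 0 := fun h1 => hr (Prod.ext h1 h2)
    rw [← card_affineLine_of_snd_ne_zero h1, ← card_map (Equiv.prodComm F F).toEmbedding]
    congr 1
    ext v
    simp [mem_affineLine, add_comm]

theorem card_affineLine_inter_le_one {r s : F × F} (hrs : r ≠ s) :
    (affineLine r ∩ affineLine s).card ≤ 1 := by
  refine card_le_one.2 fun v hv w hw => ?_
  simp only [mem_inter, mem_affineLine] at hv hw
  obtain ⟨h1, h2⟩ := hv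
  obtain ⟨h3, h4⟩ := hw
  by_contra hvw
  have hdet : r.1 * s.2 - r.2 * s.1 = 0 := by
    rcases not_and_or.1 (mt (fun h => Prod.ext h.1 h.2) hvw) with hu | hu
    · refine (mul_eq_zero.1 ?_).resolve_right (sub_ne_zero.2 hu)
      linear_combination s.2 * h1 - s.2 * h3 - r.2 * h2 + r.2 * h4
    · refine (mul_eq_zero.1 ?_).resolve_right (sub_ne_zero.2 hu)
      linear_combination r.1 * h2 - r.1 * h4 - s.1 * h1 + s.1 * h3
  exact hrs (Prod.ext (by linear_combination s.1 * h1 - r.1 * h2 + v.2 * hdet)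
    (by linear_combination s.2 * h1 - r.2 * h2 - v.1 * hdet))

theorem card_slopeCone (S : Finset F) : (slopeCone S).card = (Fintype.card F - 1) * S.card := by
  rw [slopeCone, card_image_of_injOn, card_product, card_erase_of_mem (mem_univ _), card_univ]
  rintro ⟨x, y⟩ hxy ⟨x', y'⟩ _ h
  simp only [Prod.mk.injEq] at h
  obtain ⟨rfl, h⟩ := h
  have hx : x ≠ 0 := (mem_erase.1 (mem_product.1 hxy).1).1
  simp [mul_left_cancel₀ hx h]

theorem card_affineLine_inter_slopeCone_le (r : F × F) (S : Finset F) :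
    (affineLine r ∩ slopeCone S).card ≤ S.card := by
  refine card_le_card_of_injOn (fun v => v.2 / v.1) ?_ ?_
  · intro v hv
    obtain ⟨x, hx, y, hy, rfl⟩ := mem_slopeCone.1 (mem_inter.1 hv).2
    simpa [hx]
  · intro v hv w hw h
    simp only [coe_inter, Set.mem_inter_iff, mem_coe, mem_affineLine, mem_slopeCone] at hv hw
    obtain ⟨hv, x, hx, y, hy, rfl⟩ := hv
    obtain ⟨hw, x', hx', y', hy', rfl⟩ := hw
    simp only [mul_div_cancel_left₀ _ hx, mul_div_cancel_left₀ _ hx'] at h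
    subst h
    have hc : r.1 + r.2 * y ≠ 0 := fun h =>
      one_ne_zero (by linear_combination -hv + x * h : (1 : F) = 0)
    have : x = x' := mul_right_cancel₀ hc (by linear_combination hv - hw)
    rw [this]

theorem disjoint_slopeCone {S S' : Finset F} (h : Disjoint S S') :
    Disjoint (slopeCone S) (slopeCone S') := by
  rw [disjoint_left]
  intro v hv hv'
  obtain ⟨x, hx, y, hy, rfl⟩ := mem_slopeCone.1 hv
  obtain ⟨x', hx', y', hy', h'⟩ := mem_slopeCone.1 hv'
  simp only [Prod.mk.injEq] at h'
  obtain ⟨rfl, h'⟩ := h'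
  exact disjoint_left.1 h hy (mul_left_cancel₀ hx h' ▸ hy')

theorem smul_mem_affineLine_iff (u : Fˣ) (r v : F × F) :
    u • v ∈ affineLine r ↔ v ∈ affineLine (u • r) := by
  simp only [mem_affineLine, Prod.smul_fst, Prod.smul_snd, Units.smul_def, smul_eq_mul]
  ring_nf

theorem smul_mem_slopeCone_iff (u : Fˣ) (S : Finset F) (v : F × F) :
    u • v ∈ slopeCone S ↔ v ∈ slopeCone S := by
  suffices h : ∀ (u : Fˣ) v, v ∈ slopeCone S → u • v ∈ slopeCone S from
    ⟨fun hv => by simpa using h u⁻¹ _ hv, h u v⟩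
  intro u v hv
  obtain ⟨x, hx, y, hy, rfl⟩ := mem_slopeCone.1 hv
  refine mem_slopeCone.2 ⟨u * x, mul_ne_zero u.ne_zero hx, y, hy, ?_⟩
  simp [Units.smul_def, mul_assoc]

theorem eq_one_of_smul_mem_affineLine {u : Fˣ} {r v : F × F} (hv : v ∈ affineLine r)
    (huv : u • v ∈ affineLine r) : u = 1 := by
  rw [mem_affineLine] at hv huv
  simp only [Prod.smul_fst, Prod.smul_snd, Units.smul_def, smul_eq_mul] at huv
  rw [← Units.val_eq_one]
  linear_combination huv - (u : F) * hv

end Plane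

section OrbitLists

open scoped Classical

variable {F : Type*} [Field F] [Fintype F] [DecidableEq F] (H : Subgroup Fˣ)

noncomputable def lineList (r : F × F) : Finset (orbitRel.Quotient H (F × F)) :=
  (affineLine r).image Quotient.mk''

noncomputable def coneList (S : Finset F) : Finset (orbitRel.Quotient H (F × F)) :=
  insert (Quotient.mk'' 0) ((slopeCone S).image Quotient.mk'')

noncomputable def listFamily {κ : Type*} (T : κ → Finset F) :
    {o : orbitRel.Quotient H (F × F) // o ≠ Quotient.mk'' 0} ⊕ κ →
      Finset (orbitRel.Quotient H (F × F))
  | .inl o => lineList H o.1.out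
  | .inr k => coneList H (T k)

variable {H}

theorem mk_zero_notMem_lineList (r : F × F) :
    (Quotient.mk'' 0 : orbitRel.Quotient H (F × F)) ∉ lineList H r := by
  simp only [lineList, mem_image, orbitRel_mk_eq_mk_zero_iff, not_exists, not_and]
  rintro v hv rfl
  exact zero_notMem_affineLine r hv

theorem card_lineList {r : F × F} (hr : r ≠ 0) : (lineList H r).card = Fintype.card F := by
  rw [lineList, card_image_of_injOn, card_affineLine hr]
  intro v hv w hw hvw
  obtain ⟨h, rfl⟩ := orbitRel_mk_eq_mk_iff.1 hvw
  have h1 : (h : Fˣ) = 1 := eq_one_of_smul_mem_affineLine hw hv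
  rw [Subgroup.smul_def, h1, one_smul]

theorem card_lineList_inter_le {r r' : F × F}
    (hrr' : (Quotient.mk'' r : orbitRel.Quotient H (F × F)) ≠ Quotient.mk'' r') :
    (lineList H r ∩ lineList H r').card ≤ Nat.card H := by
  have hsub : lineList H r ∩ lineList H r' ⊆
      univ.biUnion fun h : H =>
        (affineLine r ∩ affineLine ((h : Fˣ) • r')).image Quotient.mk'' := by
    intro x hx
    simp only [lineList, mem_inter, mem_image] at hx
    obtain ⟨⟨v, hv, rfl⟩, w, hw, hwv⟩ := hx
    obtain ⟨h, rfl⟩ := orbitRel_mk_eq_mk_iff.1 hwv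
    rw [Subgroup.smul_def, smul_mem_affineLine_iff] at hw
    exact mem_biUnion.2 ⟨h, mem_univ _, mem_image_of_mem _ (mem_inter.2 ⟨hv, hw⟩)⟩
  calc (lineList H r ∩ lineList H r').card
      ≤ ∑ h : H, ((affineLine r ∩ affineLine ((h : Fˣ) • r')).image Quotient.mk'' :
          Finset (orbitRel.Quotient H (F × F))).card :=
        (card_le_card hsub).trans card_biUnion_le
    _ ≤ ∑ _h : H, 1 := by
        refine sum_le_sum fun h _ => card_image_le.trans (card_affineLine_inter_le_one ?_)
        rintro rfl
        exact hrr' (orbitRel_mk_eq_mk_iff.2 ⟨h, rfl⟩)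
    _ = Nat.card H := by simp

theorem card_lineList_inter_coneList_le (r : F × F) (S : Finset F) :
    (lineList H r ∩ coneList H S).card ≤ S.card := by
  have hsub : lineList H r ∩ coneList H S ⊆ (affineLine r ∩ slopeCone S).image Quotient.mk'' := by
    intro x hx
    obtain ⟨hxr, hxS⟩ := mem_inter.1 hx
    obtain ⟨v, hv, rfl⟩ := mem_image.1 hxr
    rcases mem_insert.1 hxS with h0 | hxS
    · exact absurd (h0 ▸ hxr) (mk_zero_notMem_lineList r)
    obtain ⟨w, hw, hwv⟩ := mem_image.1 hxS
    obtain ⟨h, rfl⟩ := orbitRel_mk_eq_mk_iff.1 hwv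
    rw [Subgroup.smul_def, smul_mem_slopeCone_iff] at hw
    exact mem_image_of_mem _ (mem_inter.2 ⟨hv, hw⟩)
  exact (card_le_card hsub).trans (card_image_le.trans (card_affineLine_inter_slopeCone_le r S))

theorem card_coneList_inter_coneList_le {S S' : Finset F} (hSS' : Disjoint S S') :
    (coneList H S ∩ coneList H S').card ≤ 1 := by
  refine (card_le_card (t := {Quotient.mk'' 0}) fun x hx => ?_).trans (card_singleton _).le
  simp only [coneList, mem_inter, mem_insert, mem_image] at hx
  rw [mem_singleton]
  obtain ⟨rfl | ⟨v, hv, rfl⟩, hx'⟩ := hx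
  · rfl
  obtain h0 | ⟨w, hw, hwv⟩ := hx'
  · exact h0
  obtain ⟨h, rfl⟩ := orbitRel_mk_eq_mk_iff.1 hwv
  rw [Subgroup.smul_def, smul_mem_slopeCone_iff] at hw
  exact absurd hw (disjoint_left.1 (disjoint_slopeCone hSS') hv)

theorem card_coneList {S : Finset F} (hS : S.card = Nat.card H) :
    (coneList H S).card = Fintype.card F := by
  have hfree : ((slopeCone S).image Quotient.mk'' : Finset (orbitRel.Quotient H (F × F))).card *
      Nat.card H = (Fintype.card F - 1) * Nat.card H := by
    rw [Nat.card_eq_fintype_card, card_image_orbitRel_mk_mul_card, card_slopeCone, hS,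
      Nat.card_eq_fintype_card]
    · exact fun h v => (smul_mem_slopeCone_iff (h : Fˣ) S v).2
    · exact fun v hv _ => eq_one_of_smul_eq_self (ne_of_mem_of_not_mem hv (zero_notMem_slopeCone S))
  rw [coneList, card_insert_of_notMem, Nat.eq_of_mul_eq_mul_right (Nat.card_pos (α := H)) hfree]
  · have := Fintype.card_pos (α := F); omega
  · simp only [mem_image, orbitRel_mk_eq_mk_zero_iff, not_exists, not_and]
    rintro v hv rfl
    exact zero_notMem_slopeCone S hv

theorem natCard_orbitRel_quotient :
    Nat.card (orbitRel.Quotient H (F × F)) = (Fintype.card F ^ 2 - 1) / Nat.card H + 1 := by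
  set nonzeroOrbits : Finset (orbitRel.Quotient H (F × F)) := (univ.erase 0).image Quotient.mk''
  have hcount : nonzeroOrbits.card * Nat.card H = Fintype.card F ^ 2 - 1 := by
    rw [Nat.card_eq_fintype_card, card_image_orbitRel_mk_mul_card, card_erase_of_mem (mem_univ _),
      card_univ, Fintype.card_prod, sq]
    · intro h v hv
      simpa [Subgroup.smul_def, smul_eq_zero_iff_eq] using hv
    · exact fun v hv _ => eq_one_of_smul_eq_self (ne_of_mem_erase hv)
  have huniv : (univ : Finset (orbitRel.Quotient H (F × F))) =
      insert (Quotient.mk'' 0) nonzeroOrbits := by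
    rw [← image_insert, insert_erase (mem_univ _),
      image_univ_of_surjective Quotient.mk''_surjective]
  rw [Nat.card_eq_fintype_card, ← card_univ, huniv, card_insert_of_notMem,
    Nat.eq_div_of_mul_eq_left Nat.card_pos.ne' hcount]
  simp [nonzeroOrbits, orbitRel_mk_eq_mk_zero_iff]

theorem card_listFamily {κ : Type*} {T : κ → Finset F} (hT : ∀ k, (T k).card = Nat.card H) :
    ∀ i, (listFamily H T i).card = Fintype.card F
  | .inl o => card_lineList fun h => o.2 (by rw [← Quotient.out_eq' o.1, h])
  | .inr k => card_coneList (hT k)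

theorem card_listFamily_inter_le {κ : Type*} {T : κ → Finset F}
    (hT : ∀ k, (T k).card = Nat.card H) (hTd : Pairwise (Disjoint on T)) :
    ∀ i j, i ≠ j → (listFamily H T i ∩ listFamily H T j).card ≤ Nat.card H
  | .inl o, .inl o', hne => card_lineList_inter_le <| by
      rwa [Quotient.out_eq', Quotient.out_eq', Ne, ← Subtype.ext_iff, ← Sum.inl.injEq]
  | .inl _, .inr k, _ => (card_lineList_inter_coneList_le _ _).trans (hT k).le
  | .inr k, .inl _, _ => by
      rw [listFamily, listFamily, inter_comm]
      exact (card_lineList_inter_coneList_le _ _).trans (hT k).le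
  | .inr _, .inr _, hne =>
      (card_coneList_inter_coneList_le (hTd (by simpa using hne))).trans Nat.card_pos

theorem exists_uncolorable_listAssignment_of_subgroup {n : ℕ}
    (hH : 2 * Nat.card H ≤ Fintype.card F) (hn : (Fintype.card F ^ 2 - 1) / Nat.card H + 2 ≤ n) :
    ∃ L : Fin n → Finset ℕ, (∀ v, (L v).card = Fintype.card F) ∧
      (∀ u v, u ≠ v → (L u ∩ L v).card ≤ Nat.card H) ∧
      ¬ ∃ f : Fin n → ℕ, Function.Injective f ∧ ∀ v, f v ∈ L v := by
  obtain ⟨T, hT, hTd⟩ := exists_pairwise_disjoint_card_eq (m := 2) hH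
  have hcard : Nat.card ({o : orbitRel.Quotient H (F × F) // o ≠ Quotient.mk'' 0} ⊕ Fin 2) =
      Nat.card (orbitRel.Quotient H (F × F)) + 1 := by
    rw [Nat.card_sum, Nat.card_fin, Nat.card_eq_fintype_card, Fintype.card_subtype, filter_ne',
      card_erase_of_mem (mem_univ _), card_univ, Nat.card_eq_fintype_card]
    have : 0 < Fintype.card (orbitRel.Quotient H (F × F)) :=
      Fintype.card_pos_iff.2 ⟨Quotient.mk'' 0⟩
    omega
  refine exists_uncolorable_listAssignment_of_natCard_lt (listFamily H T) (card_listFamily hT)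
    (card_listFamily_inter_le hT hTd) (by omega) ?_
  rw [hcard, natCard_orbitRel_quotient]
  omega

end OrbitLists

theorem chi_list_lower_bound_general (q c n : ℕ)
    (hq : IsPrimePow q) (hlt : c < q - 1) (hdvd : c ∣ q - 1)
    (hn : (q ^ 2 - 1) / c + 2 ≤ n) :
    ∃ L : Fin n → Finset ℕ,
      (∀ v, (L v).card = q) ∧
      (∀ u v, u ≠ v → ((L u) ∩ (L v)).card ≤ c) ∧
      ¬ ∃ f : Fin n → ℕ, Function.Injective f ∧ ∀ v, f v ∈ L v := by
  obtain ⟨p, k, hp, hk, rfl⟩ := hq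
  have : Fact p.Prime := ⟨hp.nat_prime⟩
  let F := GaloisField p k
  let : Fintype F := Fintype.ofFinite F
  classical
  have hF : Fintype.card F = p ^ k := by
    rw [← Nat.card_eq_fintype_card]
    exact GaloisField.card p k hk.ne'
  let H := (powMonoidHom c : Fˣ →* Fˣ).ker
  have hH : Nat.card H = c := by
    rw [IsCyclic.card_powMonoidHom_ker, Nat.card_eq_fintype_card, Fintype.card_units, hF]
    exact Nat.gcd_eq_right hdvd
  have h2c : 2 * c ≤ p ^ k := by
    obtain ⟨m, hm⟩ := hdvd
    have : 2 ≤ m := by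
      by_contra! h
      interval_cases m <;> omega
    have : c * 2 ≤ c * m := Nat.mul_le_mul_left c this
    omega
  simpa only [hF, hH] using
    exists_uncolorable_listAssignment_of_subgroup (H := H) (by rwa [hF, hH]) (by rwa [hF, hH])

/-- Lower bound for `χ_l(K_n, c)`: if `q` is a prime power, `c < q − 1`,
`c ∣ q − 1`, and `n ≥ (q² − 1)/c + 2`, then there exists a `(q, c)`-list
assignment on `K_n` admitting no proper coloring, i.e. `χ_l(K_n, c) ≥ q + 1`. -/
theorem chi_list_lower_bound (q c n : ℕ)
    (hq : IsPrimePow q) (hc : 0 < c) (hlt : c < q - 1) (hdvd : c ∣ q - 1)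
    (hn : (q ^ 2 - 1) / c + 2 ≤ n) :
    ∃ L : Fin n → Finset ℕ,
      (∀ v, (L v).card = q) ∧
      (∀ u v, u ≠ v → ((L u) ∩ (L v)).card ≤ c) ∧
      ¬ ∃ f : Fin n → ℕ, Function.Injective f ∧ ∀ v, f v ∈ L v :=
  chi_list_lower_bound_general q c n hq hlt hdvd hn
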